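/- arXiv:2106.07094 — 3 statements merged into one kernel-verified Lean document; each statement's English description precedes it below -/
import Mathlib

section
/- Let f : ℝ^d → ℝ be convex and L-smooth (differentiable with L-Lipschitz gradient, L > 0), bounded below with f* := inf f. Let w_0 ∈ ℝ^d and define gradient-descent iterates w_{τ+1} = w_τ − η ∇f(w_τ) with step size 0 < η ≤ 1/(2L). Let E be a positive integer and u := Σ_{τ=0}^{E−1} ∇f(w_τ). Then for every w* ∈ ℝ^d, with Δ := f(w*) − f*, it holds that ‖w_0 − w*‖² − ‖w_E − w*‖² ≥ (η/(2LE)) ‖u‖² − 2 η E Δ. -/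
open scoped RealInnerProductSpace

/-!
Convexity gives `⟪∇f w, w - w*⟫ ≥ f w - f w*`, and the descent lemma at the point `w - L⁻¹ ∇f w`
gives `f w - f* ≥ ‖∇f w‖² / (2L)`. Expanding `‖w - η ∇f w - w*‖²` and using `η² ≤ η / (2L)`, one
gradient step therefore shrinks `‖w - w*‖²` by at least `η / (2L) ‖∇f w‖² - 2η (f w* - f*)`.
Summing over the `E` steps telescopes, and `‖u‖² ≤ E ∑ ‖∇f w_τ‖²` (Cauchy–Schwarz) finishes.
-/

open Set

variable {F : Type*} [NormedAddCommGroup F] [InnerProductSpace ℝ F] [CompleteSpace F] {f : F → ℝ}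

theorem HasGradientAt.hasDerivAt_comp_add_smul {g x v : F} {t : ℝ}
    (hf : HasGradientAt f g (x + t • v)) :
    HasDerivAt (fun s : ℝ => f (x + s • v)) ⟪g, v⟫ t := by
  have hline : HasDerivAt (fun s : ℝ => x + s • v) v t := by
    simpa using ((hasDerivAt_id t).smul_const v).const_add x
  exact (hf.hasFDerivAt.comp_hasDerivAt t hline).congr_deriv (by simp)

theorem ConvexOn.add_inner_sub_le_of_hasGradientAt (hconv : ConvexOn ℝ univ f) {g x : F}
    (hf : HasGradientAt f g x) (y : F) : f x + ⟪g, y - x⟫ ≤ f y := by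
  have hline : ConvexOn ℝ univ (fun s : ℝ => f (x + s • (y - x))) := by
    simpa [Function.comp_def, AffineMap.lineMap_apply, add_comm] using
      hconv.comp_affineMap (AffineMap.lineMap x y)
  have hderiv := (show HasGradientAt f g (x + (0 : ℝ) • (y - x)) by simpa using hf)
    |>.hasDerivAt_comp_add_smul
  have := hline.le_slope_of_hasDerivAt (mem_univ 0) (mem_univ 1) one_pos hderiv
  simp only [slope, sub_zero, inv_one, one_smul, add_sub_cancel, zero_smul, add_zero, vsub_eq_sub,
    smul_eq_mul, one_mul] at this
  linarith

theorem le_add_inner_add_sq_norm_of_lipschitz_gradient (hdiff : Differentiable ℝ f) {L : ℝ}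
    (hlip : ∀ x y, ‖gradient f x - gradient f y‖ ≤ L * ‖x - y‖) (x y : F) :
    f y ≤ f x + ⟪gradient f x, y - x⟫ + L / 2 * ‖y - x‖ ^ 2 := by
  set v := y - x
  -- `φ' t ≤ 0` for `t ≥ 0` by the Lipschitz bound, and `φ 1 ≤ φ 0` is the claim.
  let φ : ℝ → ℝ := fun t => f (x + t • v) - t * ⟪gradient f x, v⟫ - L / 2 * t ^ 2 * ‖v‖ ^ 2
  have hφ' : ∀ t, HasDerivAt φ (⟪gradient f (x + t • v) - gradient f x, v⟫ - L * t * ‖v‖ ^ 2) t := by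
    intro t
    have := (((hdiff _).hasGradientAt.hasDerivAt_comp_add_smul (x := x) (v := v)).sub
      ((hasDerivAt_id t).mul_const ⟪gradient f x, v⟫)).sub
      (((hasDerivAt_pow 2 t).const_mul (L / 2)).mul_const (‖v‖ ^ 2))
    exact this.congr_deriv (by simp only [inner_sub_left]; ring)
  have hφ'_nonpos : ∀ t ∈ interior (Ici (0 : ℝ)),
      ⟪gradient f (x + t • v) - gradient f x, v⟫ - L * t * ‖v‖ ^ 2 ≤ 0 := by
    intro t ht
    rw [interior_Ici] at ht
    have := calc ⟪gradient f (x + t • v) - gradient f x, v⟫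
        ≤ ‖gradient f (x + t • v) - gradient f x‖ * ‖v‖ := real_inner_le_norm _ _
      _ ≤ L * ‖t • v‖ * ‖v‖ := by
          gcongr
          simpa using hlip (x + t • v) x
      _ = L * t * ‖v‖ ^ 2 := by rw [norm_smul, Real.norm_of_nonneg ht.le]; ring
    linarith
  have hanti : AntitoneOn φ (Ici 0) :=
    antitoneOn_of_hasDerivWithinAt_nonpos (convex_Ici 0)
      (fun t _ => (hφ' t).continuousAt.continuousWithinAt)
      (fun t _ => (hφ' t).hasDerivWithinAt) hφ'_nonpos
  have hφ01 := hanti self_mem_Ici (show (1 : ℝ) ∈ Ici 0 from mem_Ici.mpr zero_le_one) zero_le_one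
  have hy : x + (1 : ℝ) • v = y := by simp [v]
  simp only [φ, hy, zero_smul, add_zero] at hφ01
  linarith

theorem sq_norm_gradient_div_le_sub (hdiff : Differentiable ℝ f) {L : ℝ} (hL : 0 < L)
    (hlip : ∀ x y, ‖gradient f x - gradient f y‖ ≤ L * ‖x - y‖) {m : ℝ}
    (hm : m ∈ lowerBounds (range f)) (x : F) :
    ‖gradient f x‖ ^ 2 / (2 * L) ≤ f x - m := by
  set g := gradient f x
  have hdescent := le_add_inner_add_sq_norm_of_lipschitz_gradient hdiff hlip x (x - L⁻¹ • g)
  rw [sub_sub_cancel_left, inner_neg_right, real_inner_smul_right, real_inner_self_eq_norm_sq,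
    norm_neg, norm_smul, Real.norm_of_nonneg (inv_nonneg.mpr hL.le)] at hdescent
  have hmin : m ≤ f (x - L⁻¹ • g) := hm (mem_range_self _)
  have : L / 2 * (L⁻¹ * ‖g‖) ^ 2 = ‖g‖ ^ 2 / (2 * L) := by field_simp
  have : L⁻¹ * ‖g‖ ^ 2 = 2 * (‖g‖ ^ 2 / (2 * L)) := by field_simp
  linarith

theorem sq_norm_sub_sub_sq_norm_gradient_step_ge (hconv : ConvexOn ℝ univ f)
    (hdiff : Differentiable ℝ f) {L : ℝ} (hL : 0 < L)
    (hlip : ∀ x y, ‖gradient f x - gradient f y‖ ≤ L * ‖x - y‖) {m : ℝ}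
    (hm : m ∈ lowerBounds (range f)) {η : ℝ} (hη0 : 0 ≤ η) (hη : η ≤ 1 / (2 * L)) (x z : F) :
    η / (2 * L) * ‖gradient f x‖ ^ 2 - 2 * η * (f z - m) ≤
      ‖x - z‖ ^ 2 - ‖x - η • gradient f x - z‖ ^ 2 := by
  set g := gradient f x
  have hinner : ‖g‖ ^ 2 / (2 * L) - (f z - m) ≤ ⟪g, x - z⟫ := by
    have hconvex := hconv.add_inner_sub_le_of_hasGradientAt (hdiff x).hasGradientAt z
    have hgrad := sq_norm_gradient_div_le_sub hdiff hL hlip hm x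
    rw [← neg_sub, inner_neg_right] at hconvex
    linarith
  have hexpand : ‖x - η • g - z‖ ^ 2 = ‖x - z‖ ^ 2 - 2 * η * ⟪g, x - z⟫ + η ^ 2 * ‖g‖ ^ 2 := by
    rw [sub_right_comm, norm_sub_sq_real, real_inner_smul_right, real_inner_comm, norm_smul,
      Real.norm_of_nonneg hη0]
    ring
  have hη2 : η ^ 2 ≤ η / (2 * L) := by
    rw [sq, div_eq_mul_one_div]; exact mul_le_mul_of_nonneg_left hη hη0
  rw [hexpand]
  linear_combination mul_le_mul_of_nonneg_left hinner (by positivity : (0 : ℝ) ≤ 2 * η) +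
    mul_le_mul_of_nonneg_right hη2 (sq_nonneg ‖g‖)

theorem sq_norm_sum_le_card_mul_sum_sq_norm {ι E : Type*} [SeminormedAddCommGroup E]
    (s : Finset ι) (v : ι → E) : ‖∑ i ∈ s, v i‖ ^ 2 ≤ s.card * ∑ i ∈ s, ‖v i‖ ^ 2 :=
  (pow_le_pow_left₀ (norm_nonneg _) (norm_sum_le s v) 2).trans sq_sum_le_card_mul_sum_sq

theorem stmt_1_general {d : ℕ} (f : EuclideanSpace ℝ (Fin d) → ℝ) (L : ℝ) (hL : 0 < L)
    (hconv : ConvexOn ℝ Set.univ f)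
    (hdiff : Differentiable ℝ f)
    (hlip : ∀ x y, ‖gradient f x - gradient f y‖ ≤ L * ‖x - y‖)
    (fstar : ℝ) (hfstar : IsGLB (Set.range f) fstar)
    (η : ℝ) (hη0 : 0 < η) (hη : η ≤ 1 / (2 * L))
    (w : ℕ → EuclideanSpace ℝ (Fin d))
    (hw : ∀ τ, w (τ + 1) = w τ - η • gradient f (w τ))
    (E : ℕ)
    (u : EuclideanSpace ℝ (Fin d))
    (hu : u = ∑ τ ∈ Finset.range E, gradient f (w τ))
    (wstar : EuclideanSpace ℝ (Fin d)) :
    ‖w 0 - wstar‖ ^ 2 - ‖w E - wstar‖ ^ 2 ≥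
      (η / (2 * L * (E : ℝ))) * ‖u‖ ^ 2 - 2 * η * (E : ℝ) * (f wstar - fstar) := by
  set S := ∑ τ ∈ Finset.range E, ‖gradient f (w τ)‖ ^ 2
  have hstep (τ : ℕ) : η / (2 * L) * ‖gradient f (w τ)‖ ^ 2 - 2 * η * (f wstar - fstar) ≤
      ‖w τ - wstar‖ ^ 2 - ‖w (τ + 1) - wstar‖ ^ 2 := hw τ ▸
    sq_norm_sub_sub_sq_norm_gradient_step_ge hconv hdiff hL hlip hfstar.1 hη0.le hη (w τ) wstar
  have htelescope : ‖w 0 - wstar‖ ^ 2 - ‖w E - wstar‖ ^ 2 ≥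
      η / (2 * L) * S - 2 * η * E * (f wstar - fstar) := by
    rw [← Finset.sum_range_sub' (fun τ => ‖w τ - wstar‖ ^ 2)]
    calc η / (2 * L) * S - 2 * η * E * (f wstar - fstar)
        = ∑ τ ∈ Finset.range E,
            (η / (2 * L) * ‖gradient f (w τ)‖ ^ 2 - 2 * η * (f wstar - fstar)) := by
          rw [Finset.sum_sub_distrib, ← Finset.mul_sum, Finset.sum_const, Finset.card_range,
            nsmul_eq_mul]
          ring
      _ ≤ _ := Finset.sum_le_sum fun τ _ => hstep τ
  have hu_le : ‖u‖ ^ 2 / E ≤ S := by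
    refine div_le_of_le_mul₀ E.cast_nonneg (by positivity) ?_
    simpa [hu, mul_comm] using sq_norm_sum_le_card_mul_sum_sq_norm (Finset.range E)
      fun τ => gradient f (w τ)
  calc η / (2 * L * E) * ‖u‖ ^ 2 - 2 * η * E * (f wstar - fstar)
      = η / (2 * L) * (‖u‖ ^ 2 / E) - 2 * η * E * (f wstar - fstar) := by ring
    _ ≤ η / (2 * L) * S - 2 * η * E * (f wstar - fstar) := by gcongr
    _ ≤ _ := htelescope

/-- Equation (jan30-4): distance decrease in terms of the aggregated update
`u = Σ_{τ<E} ∇f(w_τ)`. -/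
theorem stmt_1 {d : ℕ} (f : EuclideanSpace ℝ (Fin d) → ℝ) (L : ℝ) (hL : 0 < L)
    (hconv : ConvexOn ℝ Set.univ f)
    (hdiff : Differentiable ℝ f)
    (hlip : ∀ x y, ‖gradient f x - gradient f y‖ ≤ L * ‖x - y‖)
    (fstar : ℝ) (hfstar : IsGLB (Set.range f) fstar)
    (η : ℝ) (hη0 : 0 < η) (hη : η ≤ 1 / (2 * L))
    (w : ℕ → EuclideanSpace ℝ (Fin d))
    (hw : ∀ τ, w (τ + 1) = w τ - η • gradient f (w τ))
    (E : ℕ) (hE : 0 < E)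
    (u : EuclideanSpace ℝ (Fin d))
    (hu : u = ∑ τ ∈ Finset.range E, gradient f (w τ))
    (wstar : EuclideanSpace ℝ (Fin d)) :
    ‖w 0 - wstar‖ ^ 2 - ‖w E - wstar‖ ^ 2 ≥
      (η / (2 * L * (E : ℝ))) * ‖u‖ ^ 2 - 2 * η * (E : ℝ) * (f wstar - fstar) :=
  stmt_1_general f L hL hconv hdiff hlip fstar hfstar η hη0 hη w hw E u hu wstar
end

section
/- Let f : ℝ^d → ℝ be convex and L-smooth (differentiable with L-Lipschitz gradient, L > 0). Let w_0 ∈ ℝ^d and define gradient-descent iterates w_{τ+1} = w_τ − η ∇f(w_τ) with step size η > 0. Then for every integer τ ≥ 0, ‖∇f(w_{τ+1})‖² ≤ ‖∇f(w_τ)‖² − (2/(ηL) − 1) ‖∇f(w_{τ+1}) − ∇f(w_τ)‖². -/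
/-!
Co-coercivity of the gradient of a convex `L`-smooth function, applied to `x` and
`y = x - η ∇f x`, gives `η ⟪∇f x - ∇f y, ∇f x⟫ ≥ ‖∇f y - ∇f x‖² / L`; expanding
`‖∇f y‖² = ‖∇f x + (∇f y - ∇f x)‖²` then yields the claim. Co-coercivity itself follows by
symmetrising `f x + ⟪∇f x, y - x⟫ + ‖∇f y - ∇f x‖² / (2L) ≤ f y`, which combines the first-order
convexity inequality at `x` with the descent lemma at `y`, both evaluated at the gradient step
`y - L⁻¹ (∇f y - ∇f x)`.
-/

open scoped RealInnerProductSpace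

variable {E : Type*} [NormedAddCommGroup E] [InnerProductSpace ℝ E] [CompleteSpace E]
  {f : E → ℝ} {L : ℝ}

lemma DifferentiableAt.hasDerivAt_apply_add_smul {x v : E} {t : ℝ}
    (hf : DifferentiableAt ℝ f (x + t • v)) :
    HasDerivAt (fun s : ℝ => f (x + s • v)) ⟪gradient f (x + t • v), v⟫ t := by
  have hline : HasDerivAt (fun s : ℝ => x + s • v) v t := by
    simpa using ((hasDerivAt_id t).smul_const v).const_add x
  rw [inner_gradient_left]
  exact hf.hasFDerivAt.comp_hasDerivAt t hline

lemma ConvexOn.add_inner_gradient_le (hconv : ConvexOn ℝ Set.univ f) {x : E}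
    (hf : DifferentiableAt ℝ f x) (y : E) :
    f x + ⟪gradient f x, y - x⟫ ≤ f y := by
  have hline : ConvexOn ℝ Set.univ (fun s : ℝ => f (x + s • (y - x))) := by
    have hfun : (fun s : ℝ => f (x + s • (y - x))) = f ∘ AffineMap.lineMap x y := by
      funext s
      simp [AffineMap.lineMap_apply_module', add_comm]
    simpa [hfun] using hconv.comp_affineMap (AffineMap.lineMap x y)
  have hderiv : HasDerivAt (fun s : ℝ => f (x + s • (y - x))) ⟪gradient f x, y - x⟫ 0 := by
    have hf₀ : DifferentiableAt ℝ f (x + (0 : ℝ) • (y - x)) := by simpa using hf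
    simpa using hf₀.hasDerivAt_apply_add_smul
  have hslope := hline.le_slope_of_hasDerivAt (Set.mem_univ 0) (Set.mem_univ 1) one_pos hderiv
  simp only [slope_def_field, one_smul, zero_smul, add_zero, add_sub_cancel, sub_zero,
    div_one] at hslope
  linarith

def HasLipschitzGradient (f : E → ℝ) (L : ℝ) : Prop :=
  ∀ x y, ‖gradient f x - gradient f y‖ ≤ L * ‖x - y‖

namespace HasLipschitzGradient

lemma apply_le_add_inner_gradient_add (hlip : HasLipschitzGradient f L)
    (hf : Differentiable ℝ f) (x y : E) :
    f y ≤ f x + ⟪gradient f x, y - x⟫ + L / 2 * ‖y - x‖ ^ 2 := by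
  set v := y - x
  have hderiv (t : ℝ) : HasDerivAt (fun s : ℝ => f (x + s • v) - s * ⟪gradient f x, v⟫)
      ⟪gradient f (x + t • v) - gradient f x, v⟫ t := by
    rw [inner_sub_left]
    simpa using (hf _).hasDerivAt_apply_add_smul.fun_sub ((hasDerivAt_id t).mul_const _)
  have hbound (t : ℝ) : HasDerivAt (fun s : ℝ => f x + L / 2 * s ^ 2 * ‖v‖ ^ 2)
      (L * t * ‖v‖ ^ 2) t := by
    have hsq : HasDerivAt (fun s : ℝ => s ^ 2) (2 * t) t := by simpa using hasDerivAt_pow 2 t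
    rw [show L * t * ‖v‖ ^ 2 = L / 2 * (2 * t) * ‖v‖ ^ 2 by ring]
    exact ((hsq.const_mul (L / 2)).mul_const (‖v‖ ^ 2)).const_add (f x)
  have hslope {t : ℝ} (ht : 0 ≤ t) :
      ⟪gradient f (x + t • v) - gradient f x, v⟫ ≤ L * t * ‖v‖ ^ 2 :=
    calc ⟪gradient f (x + t • v) - gradient f x, v⟫
        ≤ ‖gradient f (x + t • v) - gradient f x‖ * ‖v‖ := real_inner_le_norm _ _
      _ ≤ L * ‖x + t • v - x‖ * ‖v‖ := by gcongr; exact hlip _ _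
      _ = L * t * ‖v‖ ^ 2 := by
        rw [add_sub_cancel_left, norm_smul, Real.norm_of_nonneg ht]
        ring
  have hend := image_le_of_deriv_right_le_deriv_boundary
    (fun t _ => (hderiv t).continuousAt.continuousWithinAt)
    (fun t _ => (hderiv t).hasDerivWithinAt) (by simp)
    (fun t _ => (hbound t).continuousAt.continuousWithinAt)
    (fun t _ => (hbound t).hasDerivWithinAt) (fun t ht => hslope ht.1)
    (Set.right_mem_Icc.mpr zero_le_one)
  simp only [one_smul, one_mul, one_pow, mul_one, v, add_sub_cancel] at hend
  linarith

lemma add_inner_gradient_add_norm_sq_le (hlip : HasLipschitzGradient f L)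
    (hconv : ConvexOn ℝ Set.univ f) (hf : Differentiable ℝ f) (hL : 0 < L) (x y : E) :
    f x + ⟪gradient f x, y - x⟫ + ‖gradient f y - gradient f x‖ ^ 2 / (2 * L) ≤ f y := by
  set u := gradient f y - gradient f x
  -- the point reached from `y` by a gradient step for `f - ⟪∇f x, ·⟫`, which is minimal at `x`
  set z := y - L⁻¹ • u
  have hconvex := hconv.add_inner_gradient_le (hf x) z
  have hdescent := hlip.apply_le_add_inner_gradient_add hf y z
  have hzx : ⟪gradient f x, z - x⟫ = ⟪gradient f x, y - x⟫ - L⁻¹ * ⟪gradient f x, u⟫ := by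
    rw [sub_right_comm, inner_sub_right, real_inner_smul_right]
  have hzy : ⟪gradient f y, z - y⟫ = -(L⁻¹ * ⟪gradient f y, u⟫) := by
    rw [sub_sub_cancel_left, inner_neg_right, real_inner_smul_right]
  have hnorm : ‖z - y‖ = L⁻¹ * ‖u‖ := by
    rw [sub_sub_cancel_left, norm_neg, norm_smul, Real.norm_of_nonneg (by positivity)]
  have hu : L⁻¹ * ⟪gradient f y, u⟫ - L⁻¹ * ⟪gradient f x, u⟫ = L⁻¹ * ‖u‖ ^ 2 := by
    rw [← mul_sub, ← inner_sub_left, real_inner_self_eq_norm_sq]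
  have hcoeff : L / 2 * (L⁻¹ * ‖u‖) ^ 2 = L⁻¹ * ‖u‖ ^ 2 - ‖u‖ ^ 2 / (2 * L) := by
    field_simp
    ring
  rw [hzx] at hconvex
  rw [hzy, hnorm, hcoeff] at hdescent
  linarith

lemma div_le_inner_gradient_sub (hlip : HasLipschitzGradient f L)
    (hconv : ConvexOn ℝ Set.univ f) (hf : Differentiable ℝ f) (hL : 0 < L) (x y : E) :
    ‖gradient f x - gradient f y‖ ^ 2 / L ≤ ⟪gradient f x - gradient f y, x - y⟫ := by
  have hxy := hlip.add_inner_gradient_add_norm_sq_le hconv hf hL x y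
  have hyx := hlip.add_inner_gradient_add_norm_sq_le hconv hf hL y x
  rw [norm_sub_rev] at hxy
  have hsplit : ⟪gradient f x - gradient f y, x - y⟫
      = -⟪gradient f x, y - x⟫ - ⟪gradient f y, x - y⟫ := by
    rw [inner_sub_left, ← inner_neg_right, neg_sub]
  have hhalf : ‖gradient f x - gradient f y‖ ^ 2 / L
      = 2 * (‖gradient f x - gradient f y‖ ^ 2 / (2 * L)) := by
    field_simp
  linarith

lemma norm_gradient_sq_le_of_gradient_step (hlip : HasLipschitzGradient f L)
    (hconv : ConvexOn ℝ Set.univ f) (hf : Differentiable ℝ f) (hL : 0 < L) {η : ℝ}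
    (hη : 0 < η) (x : E) :
    ‖gradient f (x - η • gradient f x)‖ ^ 2 ≤ ‖gradient f x‖ ^ 2
      - (2 / (η * L) - 1) * ‖gradient f (x - η • gradient f x) - gradient f x‖ ^ 2 := by
  set g := gradient f x
  set g' := gradient f (x - η • g)
  have hcoco := hlip.div_le_inner_gradient_sub hconv hf hL (x - η • g) x
  rw [sub_sub_cancel_left, inner_neg_right, real_inner_smul_right] at hcoco
  have hinner : ‖g' - g‖ ^ 2 / (η * L) ≤ -⟪g' - g, g⟫ := by
    rw [mul_comm η L, ← div_div, div_le_iff₀ hη]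
    linarith
  have hexpand : ‖g'‖ ^ 2 = ‖g‖ ^ 2 + 2 * ⟪g, g' - g⟫ + ‖g' - g‖ ^ 2 := by
    rw [← norm_add_sq_real, add_sub_cancel]
  rw [hexpand, real_inner_comm]
  linarith [show (2 / (η * L) - 1) * ‖g' - g‖ ^ 2 = 2 * (‖g' - g‖ ^ 2 / (η * L)) - ‖g' - g‖ ^ 2
    by ring]

end HasLipschitzGradient

/-- Lemma F.3: per-step gradient-norm decrease for gradient descent on a convex,
`L`-smooth function. -/
theorem stmt_3 {d : ℕ} (f : EuclideanSpace ℝ (Fin d) → ℝ) (L : ℝ) (hL : 0 < L)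
    (hconv : ConvexOn ℝ Set.univ f)
    (hdiff : Differentiable ℝ f)
    (hlip : ∀ x y, ‖gradient f x - gradient f y‖ ≤ L * ‖x - y‖)
    (η : ℝ) (hη0 : 0 < η)
    (w : ℕ → EuclideanSpace ℝ (Fin d))
    (hw : ∀ τ, w (τ + 1) = w τ - η • gradient f (w τ)) :
    ∀ τ : ℕ,
      ‖gradient f (w (τ + 1))‖ ^ 2 ≤
        ‖gradient f (w τ)‖ ^ 2
          - (2 / (η * L) - 1) * ‖gradient f (w (τ + 1)) - gradient f (w τ)‖ ^ 2 := by
  intro τ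
  rw [hw τ]
  exact HasLipschitzGradient.norm_gradient_sq_le_of_gradient_step hlip hconv hdiff hL hη0 (w τ)
end

section
/- Let f : ℝ^d → ℝ be convex and L-smooth (differentiable with L-Lipschitz gradient, L > 0), bounded below with f* := inf f. Let w_0 ∈ ℝ^d and define gradient-descent iterates w_{τ+1} = w_τ − η ∇f(w_τ) with step size 0 < η ≤ 1/L. Let E be a positive integer and u := Σ_{τ=0}^{E−1} ∇f(w_τ). Then for every w* ∈ ℝ^d, with Δ := f(w*) − f*, it holds that −2 η ⟨u, w_0 − w*⟩ + η² ‖u‖² ≤ −η E (2 − 2ηLE − 4η²L²E²)·(f(w_0) − f(w*)) + (2η²LE² + 4η³L²E³)·Δ. -/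
/-!
Along gradient descent the squared distance to `w*` changes at step `τ` by
`-2η⟪∇f(w_τ), w_τ - w*⟫ + η²‖∇f(w_τ)‖²`, and these increments add up to the left-hand side
since `w_E = w_0 - η u`. Convexity bounds the inner product below by `f(w_τ) - f(w*)`, and
`L`-smoothness together with `f ≥ f*` gives `‖∇f‖² ≤ 2L(f - f*)`. As `f(w_τ)` is nonincreasing and
each step lowers it by at most `η‖∇f‖² ≤ 2ηL(f(w_0) - f*)`, the `τ`-th increment is at most
`-2η(f(w_0) - f(w*)) + (2τ + 1)·2η²L(f(w_0) - f*)`. Summing over `τ < E` gives a bound that beats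
the claimed one by `4η³L²E³(f(w_0) - f*) ≥ 0`.
-/

open scoped RealInnerProductSpace Gradient

variable {F : Type*} [NormedAddCommGroup F] [InnerProductSpace ℝ F]

theorem norm_sub_smul_sq (x g : F) (η : ℝ) :
    ‖x - η • g‖ ^ 2 = ‖x‖ ^ 2 - 2 * η * ⟪g, x⟫ + η ^ 2 * ‖g‖ ^ 2 := by
  rw [norm_sub_sq_real, real_inner_smul_right, real_inner_comm, norm_smul, mul_pow,
    Real.norm_eq_abs, sq_abs]
  ring

variable [CompleteSpace F] {f : F → ℝ}

open AffineMap

theorem HasGradientAt.hasDerivAt_comp_lineMap {g x y : F} {t : ℝ}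
    (hf : HasGradientAt f g (lineMap x y t)) :
    HasDerivAt (fun s : ℝ => f (lineMap x y s)) ⟪g, y - x⟫ t := by
  have h := (hasGradientAt_iff_hasFDerivAt.mp hf).comp_hasDerivAt t hasDerivAt_lineMap
  rw [InnerProductSpace.toDual_apply_apply] at h
  exact h

theorem ConvexOn.add_inner_le_of_hasGradientAt (hf : ConvexOn ℝ Set.univ f) {g x : F}
    (hg : HasGradientAt f g x) (y : F) : f x + ⟪g, y - x⟫ ≤ f y := by
  have hφ : ConvexOn ℝ Set.univ (fun s : ℝ => f (lineMap x y s)) :=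
    hf.comp_affineMap (lineMap x y)
  have hd := (lineMap_apply_zero x y (k := ℝ) ▸ hg).hasDerivAt_comp_lineMap
  have := hφ.le_slope_of_hasDerivAt (Set.mem_univ 0) (Set.mem_univ 1) zero_lt_one hd
  rw [slope_def_field, lineMap_apply_zero, lineMap_apply_one, sub_zero, div_one] at this
  linarith

theorem le_add_inner_gradient_add_sq {L : ℝ} (hf : Differentiable ℝ f)
    (hLip : ∀ x y, ‖∇ f x - ∇ f y‖ ≤ L * ‖x - y‖) (x y : F) :
    f y ≤ f x + ⟪∇ f x, y - x⟫ + L / 2 * ‖y - x‖ ^ 2 := by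
  set ψ : ℝ → ℝ := fun t => f (lineMap x y t) - t * ⟪∇ f x, y - x⟫ - L * ‖y - x‖ ^ 2 / 2 * t ^ 2
  have hψ : ∀ t, HasDerivAt ψ
      (⟪∇ f (lineMap x y t) - ∇ f x, y - x⟫ - L * ‖y - x‖ ^ 2 * t) t := by
    intro t
    refine ((((hf _).hasGradientAt.hasDerivAt_comp_lineMap).sub
      ((hasDerivAt_id t).mul_const _)).sub ((hasDerivAt_pow 2 t).const_mul _)).congr_deriv ?_
    rw [inner_sub_left]; ring
  have hanti : AntitoneOn ψ (Set.Ici 0) := by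
    refine antitoneOn_of_deriv_nonpos (convex_Ici 0)
      (fun t _ => (hψ t).continuousAt.continuousWithinAt)
      (fun t _ => (hψ t).differentiableAt.differentiableWithinAt) fun t ht => ?_
    rw [interior_Ici, Set.mem_Ioi] at ht
    rw [(hψ t).deriv, sub_nonpos]
    calc ⟪∇ f (lineMap x y t) - ∇ f x, y - x⟫
        ≤ ‖∇ f (lineMap x y t) - ∇ f x‖ * ‖y - x‖ := real_inner_le_norm _ _
      _ ≤ L * ‖lineMap x y t - x‖ * ‖y - x‖ := by gcongr; exact hLip _ _
      _ = L * ‖y - x‖ ^ 2 * t := by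
        rw [← vsub_eq_sub, lineMap_vsub_left, vsub_eq_sub, norm_smul, Real.norm_of_nonneg ht.le]
        ring
  have := hanti Set.self_mem_Ici (zero_le_one' ℝ) zero_le_one
  simp only [ψ, lineMap_apply_zero, lineMap_apply_one] at this
  linarith

theorem apply_sub_smul_gradient_le {L : ℝ} (hf : Differentiable ℝ f)
    (hLip : ∀ x y, ‖∇ f x - ∇ f y‖ ≤ L * ‖x - y‖) (x : F) (η : ℝ) :
    f (x - η • ∇ f x) ≤ f x - η * (1 - L * η / 2) * ‖∇ f x‖ ^ 2 := by
  have h := le_add_inner_gradient_add_sq hf hLip x (x - η • ∇ f x)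
  rw [sub_sub_cancel_left, norm_neg, inner_neg_right, real_inner_smul_right,
    real_inner_self_eq_norm_sq, norm_smul, mul_pow, Real.norm_eq_abs, sq_abs] at h
  linarith

theorem norm_gradient_sq_le {L m : ℝ} (hf : Differentiable ℝ f)
    (hLip : ∀ x y, ‖∇ f x - ∇ f y‖ ≤ L * ‖x - y‖) (hL : 0 < L) (hm : ∀ x, m ≤ f x) (x : F) :
    ‖∇ f x‖ ^ 2 ≤ 2 * L * (f x - m) := by
  have h := (hm _).trans (apply_sub_smul_gradient_le hf hLip x L⁻¹)
  have : L⁻¹ * (1 - L * L⁻¹ / 2) = (2 * L)⁻¹ := by field_simp; ring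
  rw [this, ← div_eq_inv_mul] at h
  rw [← div_le_iff₀' (by positivity)]
  linarith

section GradientDescent

variable {η : ℝ} {w : ℕ → F}

theorem gd_eq_sub_smul_sum (hw : ∀ τ, w (τ + 1) = w τ - η • ∇ f (w τ)) (n : ℕ) :
    w n = w 0 - η • ∑ τ ∈ Finset.range n, ∇ f (w τ) := by
  induction n with
  | zero => simp
  | succ n ih => rw [hw, Finset.sum_range_succ, smul_add, ← sub_sub, ← ih]

theorem antitone_apply_gd {L : ℝ} (hf : Differentiable ℝ f)
    (hLip : ∀ x y, ‖∇ f x - ∇ f y‖ ≤ L * ‖x - y‖) (hη : 0 ≤ η) (hηL : η * L ≤ 2)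
    (hw : ∀ τ, w (τ + 1) = w τ - η • ∇ f (w τ)) : Antitone (f ∘ w) := by
  refine antitone_nat_of_succ_le fun τ => ?_
  have h := apply_sub_smul_gradient_le hf hLip (w τ) η
  have : 0 ≤ η * (1 - L * η / 2) := mul_nonneg hη (by linarith)
  simp only [Function.comp_apply, hw]
  nlinarith [sq_nonneg ‖∇ f (w τ)‖]

theorem sub_apply_gd_le {L m : ℝ} (hconv : ConvexOn ℝ Set.univ f) (hf : Differentiable ℝ f)
    (hLip : ∀ x y, ‖∇ f x - ∇ f y‖ ≤ L * ‖x - y‖) (hL : 0 < L) (hm : ∀ x, m ≤ f x)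
    (hη : 0 ≤ η) (hηL : η * L ≤ 2) (hw : ∀ τ, w (τ + 1) = w τ - η • ∇ f (w τ)) (n : ℕ) :
    f (w 0) - f (w n) ≤ n * (2 * η * L * (f (w 0) - m)) := by
  induction n with
  | zero => simp
  | succ n ih =>
    have hstep : f (w n) - f (w (n + 1)) ≤ η * ‖∇ f (w n)‖ ^ 2 := by
      have := hconv.add_inner_le_of_hasGradientAt (hf (w n)).hasGradientAt (w (n + 1))
      rw [hw, sub_sub_cancel_left, inner_neg_right, real_inner_smul_right,
        real_inner_self_eq_norm_sq] at this
      rw [hw]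
      linarith
    have hgrad : η * ‖∇ f (w n)‖ ^ 2 ≤ η * (2 * L * (f (w 0) - m)) := by
      have h : f (w n) ≤ f (w 0) := antitone_apply_gd hf hLip hη hηL hw (Nat.zero_le n)
      grw [norm_gradient_sq_le hf hLip hL hm (w n), h]
    push_cast
    linarith

theorem norm_gd_succ_sub_sq_le {L m : ℝ} (hconv : ConvexOn ℝ Set.univ f)
    (hf : Differentiable ℝ f) (hLip : ∀ x y, ‖∇ f x - ∇ f y‖ ≤ L * ‖x - y‖) (hL : 0 < L)
    (hm : ∀ x, m ≤ f x) (hη : 0 ≤ η) (hηL : η * L ≤ 2)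
    (hw : ∀ τ, w (τ + 1) = w τ - η • ∇ f (w τ)) (z : F) (n : ℕ) :
    ‖w (n + 1) - z‖ ^ 2 ≤ ‖w n - z‖ ^ 2 - 2 * η * (f (w 0) - f z)
      + (2 * n + 1) * (2 * η ^ 2 * L * (f (w 0) - m)) := by
  have hconvz : f (w n) - f z ≤ ⟪∇ f (w n), w n - z⟫ := by
    have := hconv.add_inner_le_of_hasGradientAt (hf (w n)).hasGradientAt z
    rw [← neg_sub, inner_neg_right] at this
    linarith
  have hgrad := norm_gradient_sq_le hf hLip hL hm (w n)
  have hdesc := sub_apply_gd_le hconv hf hLip hL hm hη hηL hw n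
  have hmono : f (w n) ≤ f (w 0) := antitone_apply_gd hf hLip hη hηL hw (Nat.zero_le n)
  calc ‖w (n + 1) - z‖ ^ 2
      = ‖w n - z‖ ^ 2 - 2 * η * ⟪∇ f (w n), w n - z⟫ + η ^ 2 * ‖∇ f (w n)‖ ^ 2 := by
        rw [hw, sub_right_comm, norm_sub_smul_sq]
    _ ≤ ‖w n - z‖ ^ 2 - 2 * η * (f (w n) - f z) + η ^ 2 * (2 * L * (f (w n) - m)) := by
        linarith [mul_le_mul_of_nonneg_left hconvz hη,
          mul_le_mul_of_nonneg_left hgrad (sq_nonneg η)]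
    _ = ‖w n - z‖ ^ 2 - 2 * η * (f (w 0) - f z) + 2 * η * (f (w 0) - f (w n))
          + 2 * η ^ 2 * L * (f (w n) - m) := by ring
    _ ≤ ‖w n - z‖ ^ 2 - 2 * η * (f (w 0) - f z) + 2 * η * (n * (2 * η * L * (f (w 0) - m)))
          + 2 * η ^ 2 * L * (f (w 0) - m) := by
        have hL0 := hL.le
        gcongr
    _ = _ := by ring

theorem norm_gd_sub_sq_le {L m : ℝ} (hconv : ConvexOn ℝ Set.univ f)
    (hf : Differentiable ℝ f) (hLip : ∀ x y, ‖∇ f x - ∇ f y‖ ≤ L * ‖x - y‖) (hL : 0 < L)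
    (hm : ∀ x, m ≤ f x) (hη : 0 ≤ η) (hηL : η * L ≤ 2)
    (hw : ∀ τ, w (τ + 1) = w τ - η • ∇ f (w τ)) (z : F) (n : ℕ) :
    ‖w n - z‖ ^ 2 ≤ ‖w 0 - z‖ ^ 2 - 2 * η * n * (f (w 0) - f z)
      + 2 * η ^ 2 * L * n ^ 2 * (f (w 0) - m) := by
  have hpot : Monotone fun k : ℕ => ‖w 0 - z‖ ^ 2 - 2 * η * k * (f (w 0) - f z)
      + 2 * η ^ 2 * L * k ^ 2 * (f (w 0) - m) - ‖w k - z‖ ^ 2 :=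
    monotone_nat_of_le_succ fun k => by
      have := norm_gd_succ_sub_sq_le hconv hf hLip hL hm hη hηL hw z k
      push_cast
      linarith
  have := hpot (Nat.zero_le n)
  simp only [CharP.cast_eq_zero] at this
  linarith

end GradientDescent

theorem stmt_11_general {d : ℕ} (f : EuclideanSpace ℝ (Fin d) → ℝ) (L : ℝ) (hL : 0 < L)
    (hconv : ConvexOn ℝ Set.univ f)
    (hdiff : Differentiable ℝ f)
    (hlip : ∀ x y, ‖gradient f x - gradient f y‖ ≤ L * ‖x - y‖)
    (fstar : ℝ) (hfstar : IsGLB (Set.range f) fstar)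
    (η : ℝ) (hη0 : 0 < η) (hη : η ≤ 1 / L)
    (w : ℕ → EuclideanSpace ℝ (Fin d))
    (hw : ∀ τ, w (τ + 1) = w τ - η • gradient f (w τ))
    (E : ℕ)
    (u : EuclideanSpace ℝ (Fin d))
    (hu : u = ∑ τ ∈ Finset.range E, gradient f (w τ))
    (wstar : EuclideanSpace ℝ (Fin d))
    (Δ : ℝ) (hΔ : Δ = f wstar - fstar) :
    -2 * η * ⟪u, w 0 - wstar⟫ + η ^ 2 * ‖u‖ ^ 2 ≤
      -(η * (E : ℝ)) * (2 - 2 * η * L * (E : ℝ) - 4 * η ^ 2 * L ^ 2 * (E : ℝ) ^ 2)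
          * (f (w 0) - f wstar)
        + (2 * η ^ 2 * L * (E : ℝ) ^ 2 + 4 * η ^ 3 * L ^ 2 * (E : ℝ) ^ 3) * Δ := by
  have hlow : ∀ x, fstar ≤ f x := fun x => hfstar.1 ⟨x, rfl⟩
  have hηL : η * L ≤ 2 := by
    rw [le_div_iff₀ hL] at hη
    linarith
  have hdist : -2 * η * ⟪u, w 0 - wstar⟫ + η ^ 2 * ‖u‖ ^ 2
      = ‖w E - wstar‖ ^ 2 - ‖w 0 - wstar‖ ^ 2 := by
    rw [hu, gd_eq_sub_smul_sum hw E, sub_right_comm, norm_sub_smul_sq]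
    ring
  have hbound := norm_gd_sub_sq_le hconv hdiff hlip hL hlow hη0.le hηL hw wstar E
  have hgap : 0 ≤ 4 * η ^ 3 * L ^ 2 * (E : ℝ) ^ 3 * (f (w 0) - fstar) :=
    mul_nonneg (by positivity) (sub_nonneg.mpr (hlow (w 0)))
  rw [hdist, hΔ]
  linarith

/-- Case 2 (equation pf-july15-16) in the proof of Theorem B.1: bound on the
unclipped-update term. -/
theorem stmt_11 {d : ℕ} (f : EuclideanSpace ℝ (Fin d) → ℝ) (L : ℝ) (hL : 0 < L)
    (hconv : ConvexOn ℝ Set.univ f)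
    (hdiff : Differentiable ℝ f)
    (hlip : ∀ x y, ‖gradient f x - gradient f y‖ ≤ L * ‖x - y‖)
    (fstar : ℝ) (hfstar : IsGLB (Set.range f) fstar)
    (η : ℝ) (hη0 : 0 < η) (hη : η ≤ 1 / L)
    (w : ℕ → EuclideanSpace ℝ (Fin d))
    (hw : ∀ τ, w (τ + 1) = w τ - η • gradient f (w τ))
    (E : ℕ) (hE : 0 < E)
    (u : EuclideanSpace ℝ (Fin d))
    (hu : u = ∑ τ ∈ Finset.range E, gradient f (w τ))
    (wstar : EuclideanSpace ℝ (Fin d))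
    (Δ : ℝ) (hΔ : Δ = f wstar - fstar) :
    -2 * η * ⟪u, w 0 - wstar⟫ + η ^ 2 * ‖u‖ ^ 2 ≤
      -(η * (E : ℝ)) * (2 - 2 * η * L * (E : ℝ) - 4 * η ^ 2 * L ^ 2 * (E : ℝ) ^ 2)
          * (f (w 0) - f wstar)
        + (2 * η ^ 2 * L * (E : ℝ) ^ 2 + 4 * η ^ 3 * L ^ 2 * (E : ℝ) ^ 3) * Δ :=
  stmt_11_general f L hL hconv hdiff hlip fstar hfstar η hη0 hη w hw E u hu wstar Δ hΔ
end
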